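/- Let 0 < β₁ < β₂ < ··· < β_n < 1, let d₁,...,d_n > 0, let α ∈ (0,2], and define f(η, ξ) = Σ_{k=1}^n |d_k η|^{β_k} cos(πβ_k/2) + ‖ξ‖^α and g(η) = Σ_{k=1}^n |d_k η|^{β_k} sin(πβ_k/2) for (η,ξ) ∈ ℝ × ℝ^d. Then there exists a constant K ≥ 1 such that for all (η,ξ) with |η| + ‖ξ‖ > 1, K^{−1}/(|η|^{β_n} + ‖ξ‖^α) ≤ (1+f(η,ξ))/((1+f(η,ξ))² + g(η)²) ≤ K/(|η|^{β_n} + ‖ξ‖^α). -/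
import Mathlib


open Real Finset

set_option maxHeartbeats 4000000 in
/-- Two-sided estimate for `Re(1/(1+Φ(η,ξ)))` where `Φ = f − ig` is the
characteristic exponent of `(D(x), Y(x))`, `D` a mixture of `n+1` independent stable
subordinators of indices `0 < β₀ < ⋯ < βₙ < 1` with weights `d_k > 0`, and `Y` an isotropic
`α`-stable process, `α ∈ (0,2]`. -/
theorem characteristic_exponent_real_part_estimate
    (d n : ℕ) (β : Fin (n + 1) → ℝ) (dcoef : Fin (n + 1) → ℝ) (α : ℝ)
    (hβmono : StrictMono β) (hβ0 : ∀ k, 0 < β k) (hβ1 : ∀ k, β k < 1)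
    (hdc : ∀ k, 0 < dcoef k) (hα0 : 0 < α) (hα2 : α ≤ 2)
    (f : ℝ → EuclideanSpace ℝ (Fin d) → ℝ) (g : ℝ → ℝ)
    (hf : ∀ η ξ, f η ξ =
      (∑ k : Fin (n + 1), |dcoef k * η| ^ β k * Real.cos (π * β k / 2)) + ‖ξ‖ ^ α)
    (hg : ∀ η, g η = ∑ k : Fin (n + 1), |dcoef k * η| ^ β k * Real.sin (π * β k / 2)) :
    ∃ K : ℝ, 1 ≤ K ∧ ∀ (η : ℝ) (ξ : EuclideanSpace ℝ (Fin d)), 1 < |η| + ‖ξ‖ →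
      K⁻¹ / (|η| ^ β (Fin.last n) + ‖ξ‖ ^ α) ≤
        (1 + f η ξ) / ((1 + f η ξ) ^ 2 + g η ^ 2) ∧
      (1 + f η ξ) / ((1 + f η ξ) ^ 2 + g η ^ 2) ≤
        K / (|η| ^ β (Fin.last n) + ‖ξ‖ ^ α) := by
  have hpi := Real.pi_pos
  set L := Fin.last n with hL
  -- basic trig bounds
  have hcosnn : ∀ k : Fin (n+1), 0 ≤ Real.cos (π * β k / 2) := by
    intro k
    apply Real.cos_nonneg_of_mem_Icc
    constructor
    · nlinarith [hβ0 k]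
    · nlinarith [hβ1 k, hβ0 k]
  have hsinnn : ∀ k : Fin (n+1), 0 ≤ Real.sin (π * β k / 2) := by
    intro k
    apply Real.sin_nonneg_of_nonneg_of_le_pi
    · nlinarith [hβ0 k]
    · nlinarith [hβ1 k, hβ0 k]
  have hcosL : 0 < Real.cos (π * β L / 2) := by
    apply Real.cos_pos_of_mem_Ioo
    constructor
    · nlinarith [hβ0 L]
    · nlinarith [hβ1 L, hβ0 L]
  set c0 : ℝ := Real.cos (π * β L / 2) * dcoef L ^ β L with hc0def
  have hc0 : 0 < c0 := mul_pos hcosL (Real.rpow_pos_of_pos (hdc L) _)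
  set S : ℝ := ∑ k : Fin (n+1), dcoef k ^ β k with hSdef
  have hS0 : 0 ≤ S := Finset.sum_nonneg fun k _ => Real.rpow_nonneg (hdc k).le _
  set C : ℝ := 5 + 4 * S + c0⁻¹ with hCdef
  have hc0inv : 0 < c0⁻¹ := inv_pos.mpr hc0
  have hC1 : 1 ≤ C := by rw [hCdef]; linarith
  have hC0 : 0 < C := lt_of_lt_of_le one_pos hC1
  have hC3pos : 0 < C ^ 3 := pow_pos hC0 3
  have hK0 : 0 < 2 * C ^ 3 := by linarith
  refine ⟨2 * C ^ 3, by nlinarith [sq_nonneg (C - 1), sq_nonneg C], ?_⟩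
  intro η ξ hsum
  simp only [hf, hg]
  set A : ℝ := |η| ^ β L with hAdef
  set B : ℝ := ‖ξ‖ ^ α with hBdef
  have hA0 : 0 ≤ A := Real.rpow_nonneg (abs_nonneg _) _
  have hB0 : 0 ≤ B := Real.rpow_nonneg (norm_nonneg _) _
  -- lower bound on M = A + B
  have hM4 : (1:ℝ)/4 ≤ A + B := by
    rcases le_or_gt (1/2 : ℝ) |η| with h | h
    · have h1 : ((1:ℝ)/2) ^ β L ≤ A := Real.rpow_le_rpow (by norm_num) h (hβ0 L).le
      have h2 : ((1:ℝ)/2) ^ (1:ℝ) ≤ ((1:ℝ)/2) ^ β L :=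
        Real.rpow_le_rpow_of_exponent_ge (by norm_num) (by norm_num) (hβ1 L).le
      rw [Real.rpow_one] at h2
      linarith
    · have hξ : (1/2 : ℝ) ≤ ‖ξ‖ := by linarith
      have h1 : ((1:ℝ)/2) ^ α ≤ B := Real.rpow_le_rpow (by norm_num) hξ hα0.le
      have h2 : ((1:ℝ)/2) ^ (2:ℝ) ≤ ((1:ℝ)/2) ^ α :=
        Real.rpow_le_rpow_of_exponent_ge (by norm_num) (by norm_num) hα2
      have h3 : ((1:ℝ)/2 : ℝ) ^ (2:ℝ) = 1/4 := by
        rw [show (2:ℝ) = ((2:ℕ):ℝ) by norm_num, Real.rpow_natCast]; norm_num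
      rw [h3] at h2
      linarith
  have hM0 : 0 < A + B := by linarith
  -- |η|^{β k} ≤ 4 (A+B)
  have hk4 : ∀ k : Fin (n+1), |η| ^ β k ≤ 4 * (A + B) := by
    intro k
    rcases le_or_gt |η| 1 with h | h
    · have h1 : |η| ^ β k ≤ 1 := Real.rpow_le_one (abs_nonneg _) h (hβ0 k).le
      linarith
    · have h1 : |η| ^ β k ≤ A := by
        rw [hAdef]
        exact Real.rpow_le_rpow_of_exponent_le h.le (hβmono.monotone (Fin.le_last k))
      linarith
  have habsk : ∀ k : Fin (n+1), |dcoef k * η| ^ β k = dcoef k ^ β k * |η| ^ β k := by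
    intro k
    rw [abs_mul, abs_of_pos (hdc k), Real.mul_rpow (hdc k).le (abs_nonneg _)]
  -- upper bound on the trig-weighted sums
  have hfsum : (∑ k : Fin (n+1), |dcoef k * η| ^ β k * Real.cos (π * β k / 2)) ≤ S * (4 * (A + B)) := by
    rw [hSdef, Finset.sum_mul]
    apply Finset.sum_le_sum
    intro k _
    rw [habsk k]
    have h3 : 0 ≤ dcoef k ^ β k := Real.rpow_nonneg (hdc k).le _
    have h4 : 0 ≤ |η| ^ β k := Real.rpow_nonneg (abs_nonneg _) _
    calc dcoef k ^ β k * |η| ^ β k * Real.cos (π * β k / 2)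
        ≤ dcoef k ^ β k * |η| ^ β k * 1 :=
          mul_le_mul_of_nonneg_left (Real.cos_le_one _) (mul_nonneg h3 h4)
      _ = dcoef k ^ β k * |η| ^ β k := mul_one _
      _ ≤ dcoef k ^ β k * (4 * (A + B)) := mul_le_mul_of_nonneg_left (hk4 k) h3
  have hgsum : (∑ k : Fin (n+1), |dcoef k * η| ^ β k * Real.sin (π * β k / 2)) ≤ S * (4 * (A + B)) := by
    rw [hSdef, Finset.sum_mul]
    apply Finset.sum_le_sum
    intro k _
    rw [habsk k]
    have h3 : 0 ≤ dcoef k ^ β k := Real.rpow_nonneg (hdc k).le _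
    have h4 : 0 ≤ |η| ^ β k := Real.rpow_nonneg (abs_nonneg _) _
    calc dcoef k ^ β k * |η| ^ β k * Real.sin (π * β k / 2)
        ≤ dcoef k ^ β k * |η| ^ β k * 1 :=
          mul_le_mul_of_nonneg_left (Real.sin_le_one _) (mul_nonneg h3 h4)
      _ = dcoef k ^ β k * |η| ^ β k := mul_one _
      _ ≤ dcoef k ^ β k * (4 * (A + B)) := mul_le_mul_of_nonneg_left (hk4 k) h3
  have hgnn : 0 ≤ ∑ k : Fin (n+1), |dcoef k * η| ^ β k * Real.sin (π * β k / 2) :=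
    Finset.sum_nonneg fun k _ =>
      mul_nonneg (Real.rpow_nonneg (abs_nonneg _) _) (hsinnn k)
  -- single-term lower bound on the cosine sum
  have hsingle : c0 * A ≤ ∑ k : Fin (n+1), |dcoef k * η| ^ β k * Real.cos (π * β k / 2) := by
    have h : |dcoef L * η| ^ β L * Real.cos (π * β L / 2) ≤
        ∑ k : Fin (n+1), |dcoef k * η| ^ β k * Real.cos (π * β k / 2) :=
      Finset.single_le_sum
        (f := fun k : Fin (n+1) => |dcoef k * η| ^ β k * Real.cos (π * β k / 2))
        (fun k _ => mul_nonneg (Real.rpow_nonneg (abs_nonneg _) _) (hcosnn k))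
        (Finset.mem_univ L)
    have heq : |dcoef L * η| ^ β L * Real.cos (π * β L / 2) = c0 * A := by
      rw [habsk L, hc0def, hAdef]; ring
    linarith [heq ▸ h]
  set F : ℝ := 1 + ((∑ k : Fin (n+1), |dcoef k * η| ^ β k * Real.cos (π * β k / 2)) + B) with hFdef
  set G : ℝ := ∑ k : Fin (n+1), |dcoef k * η| ^ β k * Real.sin (π * β k / 2) with hGdef
  have hF1 : 1 ≤ F := by
    have h0 : 0 ≤ ∑ k : Fin (n+1), |dcoef k * η| ^ β k * Real.cos (π * β k / 2) :=
      Finset.sum_nonneg fun k _ =>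
        mul_nonneg (Real.rpow_nonneg (abs_nonneg _) _) (hcosnn k)
    rw [hFdef]; linarith
  have hF0 : 0 ≤ F := by linarith
  have hG0 : 0 ≤ G := hgnn
  -- F ≤ C (A+B)
  have hFub : F ≤ C * (A + B) := by
    have h1 : F ≤ 1 + S * (4 * (A + B)) + B := by rw [hFdef]; linarith
    have h2 : (1:ℝ) ≤ 4 * (A + B) := by linarith
    rw [hCdef]
    nlinarith [mul_nonneg hc0inv.le hM0.le]
  -- G ≤ C (A+B)
  have hGub : G ≤ C * (A + B) := by
    have h2 : (1:ℝ) ≤ 4 * (A + B) := by linarith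
    rw [hCdef]
    nlinarith [mul_nonneg hc0inv.le hM0.le, hgsum]
  -- A + B ≤ C F
  have hkey : 1 + (c0 * A + B) ≤ F := by rw [hFdef]; linarith
  clear_value A B S c0 C F G
  clear hf hg hfsum hgsum hsingle hgnn hFdef hGdef hAdef hBdef hSdef hc0def hk4 habsk
    hcosnn hsinnn hcosL hβmono hβ0 hβ1 hdc hsum
  have hBF : B ≤ F := by nlinarith [mul_nonneg hc0.le hA0]
  have hAF : A ≤ c0⁻¹ * F := by
    have hc0A : c0 * A ≤ F := by linarith
    have h := mul_le_mul_of_nonneg_left hc0A hc0inv.le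
    rwa [← mul_assoc, inv_mul_cancel₀ hc0.ne', one_mul] at h
  have hMCF : A + B ≤ C * F := by
    rw [hCdef]
    nlinarith [mul_nonneg hS0 hF0, hAF, hBF, hF0]
  have hFG : 0 < F ^ 2 + G ^ 2 := by nlinarith
  constructor
  · -- lower bound
    rw [div_le_div_iff₀ hM0 hFG]
    have hC3 : C ≤ C ^ 3 := by nlinarith [hC1, sq_nonneg (C - 1)]
    have hgoal : F ^ 2 + G ^ 2 ≤ (2 * C ^ 3) * (F * (A + B)) := by
      have h1 : F ^ 2 ≤ C * (A + B) * F := by nlinarith [hFub, hF0]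
      have h2 : G ^ 2 ≤ (C * (A + B)) ^ 2 := by nlinarith [hGub, hG0]
      have h3 : (A + B) ^ 2 ≤ C * F * (A + B) := by nlinarith [hMCF, hM0.le]
      have h4 : (C * (A + B)) ^ 2 ≤ C ^ 2 * (C * F * (A + B)) := by
        nlinarith [h3, sq_nonneg C]
      nlinarith [h1, h2, h4, mul_nonneg (mul_nonneg hF0 hM0.le) (sub_nonneg.mpr hC3)]
    calc (2 * C ^ 3)⁻¹ * (F ^ 2 + G ^ 2)
        ≤ (2 * C ^ 3)⁻¹ * ((2 * C ^ 3) * (F * (A + B))) :=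
          mul_le_mul_of_nonneg_left hgoal (by positivity)
      _ = F * (A + B) := by rw [inv_mul_cancel_left₀ hK0.ne']
  · -- upper bound
    rw [div_le_div_iff₀ hFG hM0]
    have u1 : F * (A + B) ≤ C * F ^ 2 := by nlinarith [hMCF, hF0]
    have hC2 : C ≤ 2 * C ^ 3 := by nlinarith [hC1, sq_nonneg (C - 1)]
    have u2 : C * F ^ 2 ≤ 2 * C ^ 3 * F ^ 2 :=
      mul_le_mul_of_nonneg_right hC2 (sq_nonneg F)
    nlinarith [u1, u2, mul_nonneg hK0.le (sq_nonneg G)]
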